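/- Consider the infinite uniform grid with nodes indexed by (m,n) ∈ ℤ² and the nodal values u_{m,n} = mh + α if n is odd and m ≡ 2 (mod 3); u_{m,n} = mh + β if n is odd and m ≢ 2 (mod 3); u_{m,n} = mh + β if n is even and m ≡ 1 (mod 3); u_{m,n} = mh − γ if n is even and m ≢ 1 (mod 3); where h > 0, ε ∈ ℝ, β, γ ∈ ℝ and α = 2β + γ. Then for every node (m,n) the Galerkin residual satisfies ∑_Q a_{(m,n),Q} u_Q = h² + κ (β+γ) ε for some κ ∈ {−5, −3, −1, 1, 2, 6} (depending only on the parity of n and on m mod 3), where the sum runs over the node itself and its six neighbours. In other words, under the constraint α = 2β + γ this three-parameter oscillating function satisfies the Galerkin discretization with right-hand side h² up to a perturbation κ(β+γ)ε. -/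

import Mathlib

noncomputable section

/-- The three-parameter oscillating nodal values on the infinite Grid-4 grid:
`u_{m,n} = mh + α` if `n` is odd and `m ≡ 2 (mod 3)`, `u_{m,n} = mh + β` if `n` is odd and
`m ≢ 2 (mod 3)`, `u_{m,n} = mh + β` if `n` is even and `m ≡ 1 (mod 3)`, and
`u_{m,n} = mh − γ` if `n` is even and `m ≢ 1 (mod 3)`. -/
def uosc (h α β γ : ℝ) (m n : ℤ) : ℝ :=
  (m : ℝ) * h +
    (if Odd n then (if m % 3 = 2 then α else β)
     else (if m % 3 = 1 then β else -γ))

/-- The Galerkin residual `∑_Q a_{(m,n),Q} u_Q` at the node `(m,n)` of the infinite Grid-4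
grid for diffusion `ε`, convection `(1,0)`, `c = 0`: at a node with `n` even the
coefficients of the values at `(m,n−1)`, `(m+1,n)`, `(m,n+1)`, `(m−1,n+1)`, `(m−1,n)`,
`(m−1,n−1)` and at the node itself are `−ε+h/6`, `−ε+h/3`, `−ε+h/6`, `−h/6`, `−ε−h/3`,
`−h/6`, `4ε`; at a node with `n` odd the coefficients of the values at `(m,n+1)`,
`(m+1,n+1)`, `(m+1,n)`, `(m+1,n−1)`, `(m,n−1)`, `(m−1,n)` and at the node itself are
`−ε−h/6`, `h/6`, `−ε+h/3`, `h/6`, `−ε−h/6`, `−ε−h/3`, `4ε`. -/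
def galres (h ε α β γ : ℝ) (m n : ℤ) : ℝ :=
  if Odd n then
    4 * ε * uosc h α β γ m n + (-ε - h / 6) * uosc h α β γ m (n + 1) +
      h / 6 * uosc h α β γ (m + 1) (n + 1) + (-ε + h / 3) * uosc h α β γ (m + 1) n +
      h / 6 * uosc h α β γ (m + 1) (n - 1) + (-ε - h / 6) * uosc h α β γ m (n - 1) +
      (-ε - h / 3) * uosc h α β γ (m - 1) n
  else
    4 * ε * uosc h α β γ m n + (-ε + h / 6) * uosc h α β γ m (n - 1) +
      (-ε + h / 3) * uosc h α β γ (m + 1) n + (-ε + h / 6) * uosc h α β γ m (n + 1) +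
      (-(h / 6)) * uosc h α β γ (m - 1) (n + 1) + (-ε - h / 3) * uosc h α β γ (m - 1) n +
      (-(h / 6)) * uosc h α β γ (m - 1) (n - 1)

/-! The nodal values are the linear function `mh` plus an oscillation that is `3`-periodic in `m`
and `2`-periodic in `n`, and the residual is linear in the nodal values. The linear part
contributes exactly `h²`. For the oscillation, once `α = 2β + γ` is substituted, the terms
carrying `h` cancel and the terms carrying `ε` add up to a multiple of `(β + γ) ε` that depends
only on the parity of `n` and on `m mod 3`. -/

theorem Int.emod_three_cases (m : ℤ) :
    (m % 3 = 0 ∧ (m + 1) % 3 = 1 ∧ (m - 1) % 3 = 2) ∨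
      (m % 3 = 1 ∧ (m + 1) % 3 = 2 ∧ (m - 1) % 3 = 0) ∨
      (m % 3 = 2 ∧ (m + 1) % 3 = 0 ∧ (m - 1) % 3 = 1) := by
  omega

namespace Grid4

variable (h ε : ℝ)

def residual (u : ℤ → ℤ → ℝ) (m n : ℤ) : ℝ :=
  if Odd n then
    4 * ε * u m n + (-ε - h / 6) * u m (n + 1) + h / 6 * u (m + 1) (n + 1) +
      (-ε + h / 3) * u (m + 1) n + h / 6 * u (m + 1) (n - 1) + (-ε - h / 6) * u m (n - 1) +
      (-ε - h / 3) * u (m - 1) n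
  else
    4 * ε * u m n + (-ε + h / 6) * u m (n - 1) + (-ε + h / 3) * u (m + 1) n +
      (-ε + h / 6) * u m (n + 1) + (-(h / 6)) * u (m - 1) (n + 1) +
      (-ε - h / 3) * u (m - 1) n + (-(h / 6)) * u (m - 1) (n - 1)

theorem residual_add (u v : ℤ → ℤ → ℝ) (m n : ℤ) :
    residual h ε (u + v) m n = residual h ε u m n + residual h ε v m n := by
  unfold residual
  split_ifs <;> simp only [Pi.add_apply] <;> ring

theorem residual_linear (m n : ℤ) :
    residual h ε (fun m _ => (m : ℝ) * h) m n = h ^ 2 := by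
  unfold residual
  split_ifs <;> push_cast <;> ring

def oscillation (α β γ : ℝ) (m n : ℤ) : ℝ :=
  if Odd n then (if m % 3 = 2 then α else β) else (if m % 3 = 1 then β else -γ)

theorem uosc_eq_add_oscillation (α β γ : ℝ) :
    uosc h α β γ = (fun (m _ : ℤ) => (m : ℝ) * h) + oscillation α β γ :=
  rfl

theorem galres_eq_residual (α β γ : ℝ) (m n : ℤ) :
    galres h ε α β γ m n = residual h ε (uosc h α β γ) m n :=
  rfl

theorem residual_oscillation (β γ : ℝ) (m n : ℤ) :
    ∃ κ : ℝ, κ ∈ ({-5, -3, -1, 1, 2, 6} : Set ℝ) ∧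
      residual h ε (oscillation (2 * β + γ) β γ) m n = κ * (β + γ) * ε := by
  rcases Int.even_or_odd n with hn | hn
  · have hn' : ¬Odd n := Int.not_odd_iff_even.mpr hn
    simp only [residual, oscillation, odd_add_one, odd_sub_one, hn, hn', if_true, if_false]
    obtain ⟨hm, hsucc, hpred⟩ | ⟨hm, hsucc, hpred⟩ | ⟨hm, hsucc, hpred⟩ := Int.emod_three_cases m
    · exact ⟨-3, by norm_num, by simp only [hm, hsucc, hpred]; norm_num; ring⟩
    · exact ⟨2, by norm_num, by simp only [hm, hsucc, hpred]; norm_num; ring⟩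
    · exact ⟨-5, by norm_num, by simp only [hm, hsucc, hpred]; norm_num; ring⟩
  · have hn' : ¬Even n := Int.not_even_iff_odd.mpr hn
    simp only [residual, oscillation, odd_add_one, odd_sub_one, hn, hn', if_true, if_false]
    obtain ⟨hm, hsucc, hpred⟩ | ⟨hm, hsucc, hpred⟩ | ⟨hm, hsucc, hpred⟩ := Int.emod_three_cases m
    · exact ⟨1, by norm_num, by simp only [hm, hsucc, hpred]; norm_num; ring⟩
    · exact ⟨-1, by norm_num, by simp only [hm, hsucc, hpred]; norm_num; ring⟩
    · exact ⟨6, by norm_num, by simp only [hm, hsucc, hpred]; norm_num; ring⟩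

end Grid4

theorem grid4_three_parameter_oscillation_residual_general
    (h ε α β γ : ℝ) (hα : α = 2 * β + γ) :
    ∀ m n : ℤ, ∃ κ : ℝ, κ ∈ ({-5, -3, -1, 1, 2, 6} : Set ℝ) ∧
      galres h ε α β γ m n = h ^ 2 + κ * (β + γ) * ε := by
  subst hα
  intro m n
  obtain ⟨κ, hκ, hres⟩ := Grid4.residual_oscillation h ε β γ m n
  refine ⟨κ, hκ, ?_⟩
  rw [Grid4.galres_eq_residual, Grid4.uosc_eq_add_oscillation, Grid4.residual_add,
    Grid4.residual_linear, hres]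

/-- Under the constraint `α = 2β + γ`, the three-parameter oscillating function satisfies
the Galerkin discretization with right-hand side `h²` up to a perturbation `κ(β+γ)ε` with
`κ ∈ {−5, −3, −1, 1, 2, 6}`. -/
theorem grid4_three_parameter_oscillation_residual
    (h ε α β γ : ℝ) (hh : 0 < h) (hα : α = 2 * β + γ) :
    ∀ m n : ℤ, ∃ κ : ℝ, κ ∈ ({-5, -3, -1, 1, 2, 6} : Set ℝ) ∧
      galres h ε α β γ m n = h ^ 2 + κ * (β + γ) * ε :=
  grid4_three_parameter_oscillation_residual_general h ε α β γ hα

end
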